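/- Let p and q be distinct primes with q ≠ p, and suppose q³ ≤ n. Then a Sylow q-subgroup of the alternating group Alt(n) is non-abelian. -/

import Mathlib

/-!
The Heisenberg group of upper unitriangular `3 × 3` matrices over `ZMod q` is a non-abelian
group of order `q³`. Its left regular representation consists of even permutations: for odd `q`
because the group has odd order, for `q = 2` by inspection. Hence it embeds into `Alt(n)` as soon
as `q³ ≤ n`, and by Sylow's theorem a conjugate of any Sylow `q`-subgroup contains it.
-/

open Equiv Equiv.Perm

theorem sign_mulLeft_eq_one_of_odd_card {G : Type*} [Group G] [Fintype G] [DecidableEq G]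
    (hG : Odd (Fintype.card G)) (g : G) : sign (Equiv.mulLeft g) = 1 := by
  let χ : G →* ℤˣ := sign.comp (MulAction.toPermHom G G)
  have hχ : χ g ^ Fintype.card G = 1 := by rw [← map_pow, pow_card_eq_one, map_one]
  rwa [Int.units_pow_eq_pow_mod_two, Nat.odd_iff.mp hG, pow_one] at hχ

/-- `⟨a, b, c⟩` stands for the matrix `[[1, a, c], [0, 1, b], [0, 0, 1]]`. -/
@[ext]
structure Heisenberg (q : ℕ) where
  a : ZMod q
  b : ZMod q
  c : ZMod q
deriving DecidableEq

namespace Heisenberg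

variable {q : ℕ}

def equivProd : Heisenberg q ≃ ZMod q × ZMod q × ZMod q where
  toFun x := (x.a, x.b, x.c)
  invFun x := ⟨x.1, x.2.1, x.2.2⟩

instance [NeZero q] : Fintype (Heisenberg q) := Fintype.ofEquiv _ equivProd.symm

instance : Mul (Heisenberg q) :=
  ⟨fun x y => ⟨x.a + y.a, x.b + y.b, x.c + y.c + x.a * y.b⟩⟩

@[simp] lemma mul_a (x y : Heisenberg q) : (x * y).a = x.a + y.a := rfl
@[simp] lemma mul_b (x y : Heisenberg q) : (x * y).b = x.b + y.b := rfl
@[simp] lemma mul_c (x y : Heisenberg q) : (x * y).c = x.c + y.c + x.a * y.b := rfl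

instance : One (Heisenberg q) := ⟨⟨0, 0, 0⟩⟩

@[simp] lemma one_a : (1 : Heisenberg q).a = 0 := rfl
@[simp] lemma one_b : (1 : Heisenberg q).b = 0 := rfl
@[simp] lemma one_c : (1 : Heisenberg q).c = 0 := rfl

instance : Inv (Heisenberg q) := ⟨fun x => ⟨-x.a, -x.b, x.a * x.b - x.c⟩⟩

@[simp] lemma inv_a (x : Heisenberg q) : x⁻¹.a = -x.a := rfl
@[simp] lemma inv_b (x : Heisenberg q) : x⁻¹.b = -x.b := rfl
@[simp] lemma inv_c (x : Heisenberg q) : x⁻¹.c = x.a * x.b - x.c := rfl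

instance : Group (Heisenberg q) where
  mul_assoc x y z := by ext <;> simp <;> ring
  one_mul x := by ext <;> simp
  mul_one x := by ext <;> simp
  inv_mul_cancel x := by ext <;> simp

lemma card [NeZero q] : Fintype.card (Heisenberg q) = q ^ 3 := by
  simp [Fintype.card_congr equivProd, ZMod.card, pow_three]

lemma isPGroup [NeZero q] : IsPGroup q (Heisenberg q) :=
  IsPGroup.of_card (n := 3) (by rw [Nat.card_eq_fintype_card, card])

lemma mul_ne_mul (hq : 1 < q) : (⟨1, 0, 0⟩ * ⟨0, 1, 0⟩ : Heisenberg q) ≠ ⟨0, 1, 0⟩ * ⟨1, 0, 0⟩ := by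
  have : Fact (1 < q) := ⟨hq⟩
  intro h
  simpa using congrArg Heisenberg.c h

lemma sign_mulLeft_two : ∀ g : Heisenberg 2, sign (Equiv.mulLeft g) = 1 := by
  decide

lemma sign_mulLeft [NeZero q] (hq : q.Prime) (g : Heisenberg q) : sign (Equiv.mulLeft g) = 1 := by
  rcases hq.eq_two_or_odd' with rfl | hodd
  · exact sign_mulLeft_two g
  · exact sign_mulLeft_eq_one_of_odd_card (by rw [card]; exact hodd.pow) g

end Heisenberg

theorem exists_injective_hom_alternatingGroup {G α : Type*} [Group G] [Fintype G]
    [DecidableEq G] [Fintype α] [DecidableEq α] (hsign : ∀ g : G, sign (Equiv.mulLeft g) = 1)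
    (hcard : Fintype.card G ≤ Fintype.card α) :
    ∃ φ : G →* alternatingGroup α, Function.Injective φ := by
  obtain ⟨ι⟩ := Function.Embedding.nonempty_of_card_le hcard
  let e : G ≃ Set.range ι := Equiv.ofInjective ι ι.injective
  let ψ : G →* Perm α := (extendDomainHom e).comp (MulAction.toPermHom G G)
  have hψ : Function.Injective ψ :=
    (extendDomainHom_injective e).comp MulAction.toPerm_injective
  have hψ_even (g : G) : ψ g ∈ alternatingGroup α :=
    (sign_extendDomain (Equiv.mulLeft g) e).trans (hsign g)
  exact ⟨ψ.codRestrict _ hψ_even, fun a b h => hψ (congrArg Subtype.val h)⟩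

theorem Sylow.not_isMulCommutative_of_injective {p : ℕ} [Fact p.Prime] {G K : Type*} [Group G]
    [Group K] [Finite K] (hG : IsPGroup p G) {a b : G} (hab : a * b ≠ b * a) {φ : G →* K}
    (hφ : Function.Injective φ) (P : Sylow p K) : ¬ IsMulCommutative P := by
  intro hP
  obtain ⟨Q, hQ⟩ := (hG.of_surjective φ.rangeRestrict φ.rangeRestrict_surjective).exists_le_sylow
  obtain ⟨g, rfl⟩ := MulAction.exists_smul_eq K P Q
  have hQ_comm : IsMulCommutative (g • P : Sylow p K) := by
    rw [Sylow.coe_subgroup_smul, Subgroup.pointwise_smul_def]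
    exact Subgroup.map_isMulCommutative _ _
  refine hab (hφ ?_)
  simpa using setLike_mul_comm (hQ ⟨a, rfl⟩) (hQ ⟨b, rfl⟩)

theorem stmt_5_general (q n : ℕ) (hq : q.Prime)
    (hn : q ^ 3 ≤ n) (S : Sylow q (alternatingGroup (Fin n))) :
    ¬ IsMulCommutative (S : Subgroup (alternatingGroup (Fin n))) := by
  have : Fact q.Prime := ⟨hq⟩
  have : NeZero q := ⟨hq.ne_zero⟩
  obtain ⟨φ, hφ⟩ := exists_injective_hom_alternatingGroup (α := Fin n) (Heisenberg.sign_mulLeft hq)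
    (by rwa [Heisenberg.card, Fintype.card_fin])
  exact S.not_isMulCommutative_of_injective Heisenberg.isPGroup (Heisenberg.mul_ne_mul hq.one_lt) hφ

/-- If `p` and `q` are distinct primes and `q³ ≤ n`, then a Sylow `q`-subgroup of the
alternating group on `n` letters is non-abelian. -/
theorem stmt_5 (p q n : ℕ) (hp : p.Prime) (hq : q.Prime) (hpq : q ≠ p)
    (hn : q ^ 3 ≤ n) (S : Sylow q (alternatingGroup (Fin n))) :
    ¬ IsMulCommutative (S : Subgroup (alternatingGroup (Fin n))) :=
  stmt_5_general q n hq hn S
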